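/- Let β_T > 0, λ > 0, N a positive integer, and for each j let γ_T(j) ≥ 0 satisfy Σ_{t=1}^T max_a σ̂²_{j,t-1}(a) ≤ γ_T(j)/log(1 + 1/λ). If reg_t ≤ 2√β_t · Σ_{j=1}^N max_a σ̂_{j,t-1}(a) with β_t ≤ β_T nondecreasing, then R_T² = (Σ_t reg_t)² ≤ 4 T β_T N / log(1+1/λ) · Σ_{j=1}^N γ_T(j). -/
import Mathlib


theorem cumulative_regret_bound {α : Type*} [Fintype α] [Nonempty α]
    (T N : ℕ) (hT : 0 < T) (hN : 0 < N)
    (βseq : ℕ → ℝ) (βT lam : ℝ) (hβT : 0 < βT) (hlam : 0 < lam)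
    (σhat : Fin N → ℕ → α → ℝ) (hσ : ∀ j t x, 0 ≤ σhat j t x)
    (γ : Fin N → ℝ) (hγ : ∀ j, 0 ≤ γ j)
    (hβpos : ∀ t, 0 < βseq t) (hβle : ∀ t, βseq t ≤ βT)
    (hIG : ∀ j, ∑ t ∈ Finset.range T,
        (Finset.univ.sup' Finset.univ_nonempty (fun x => σhat j t x)) ^ 2 ≤
        γ j / Real.log (1 + 1 / lam))
    (reg : ℕ → ℝ) (hregnn : ∀ t, 0 ≤ reg t)
    (hreg : ∀ t ∈ Finset.range T, reg t ≤ 2 * Real.sqrt (βseq t) *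
        ∑ j, Finset.univ.sup' Finset.univ_nonempty (fun x => σhat j t x)) :
    (∑ t ∈ Finset.range T, reg t) ^ 2 ≤
      4 * T * βT * N / Real.log (1 + 1 / lam) * ∑ j, γ j := by
  set L := Real.log (1 + 1 / lam) with hLdef
  have hL : 0 < L := Real.log_pos (by
    have : 0 < 1 / lam := by positivity
    linarith)
  set s : Fin N → ℕ → ℝ := fun j t =>
    Finset.univ.sup' Finset.univ_nonempty (fun x => σhat j t x) with hs
  have hsnn : ∀ j t, 0 ≤ s j t := fun j t => by
    obtain ⟨x⟩ := ‹Nonempty α›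
    exact le_trans (hσ j t x) (Finset.le_sup' _ (Finset.mem_univ x))
  -- Step 1: R ≤ 2√βT * Σ_t Σ_j s j t
  have hstep1 : ∑ t ∈ Finset.range T, reg t ≤
      2 * Real.sqrt βT * ∑ t ∈ Finset.range T, ∑ j, s j t := by
    rw [Finset.mul_sum]
    apply Finset.sum_le_sum
    intro t ht
    refine (hreg t ht).trans ?_
    have h1 : Real.sqrt (βseq t) ≤ Real.sqrt βT := Real.sqrt_le_sqrt (hβle t)
    have h2 : 0 ≤ ∑ j, s j t := Finset.sum_nonneg fun j _ => hsnn j t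
    nlinarith [Real.sqrt_nonneg (βseq t)]
  -- Step 2: (Σ_t Σ_j s)² ≤ T*N * Σ_t Σ_j s²
  have hstep2 : (∑ t ∈ Finset.range T, ∑ j, s j t) ^ 2 ≤
      (T * N : ℝ) * ∑ t ∈ Finset.range T, ∑ j, (s j t) ^ 2 := by
    have := sq_sum_le_card_mul_sum_sq
      (s := (Finset.range T) ×ˢ (Finset.univ : Finset (Fin N)))
      (f := fun p : ℕ × Fin N => s p.2 p.1)
    simpa [Finset.sum_product, Finset.card_product, mul_comm, mul_assoc,
      mul_left_comm] using this
  -- Step 3: Σ_t Σ_j s² ≤ Σ_j γ j / L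
  have hstep3 : ∑ t ∈ Finset.range T, ∑ j, (s j t) ^ 2 ≤ (∑ j, γ j) / L := by
    rw [Finset.sum_comm, Finset.sum_div]
    exact Finset.sum_le_sum fun j _ => hIG j
  have hRnn : 0 ≤ ∑ t ∈ Finset.range T, reg t :=
    Finset.sum_nonneg fun t _ => hregnn t
  have hSnn : 0 ≤ ∑ t ∈ Finset.range T, ∑ j, s j t :=
    Finset.sum_nonneg fun t _ => Finset.sum_nonneg fun j _ => hsnn j t
  have hsq : (∑ t ∈ Finset.range T, reg t) ^ 2 ≤
      (2 * Real.sqrt βT) ^ 2 * (∑ t ∈ Finset.range T, ∑ j, s j t) ^ 2 := by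
    rw [← mul_pow]
    exact pow_le_pow_left₀ hRnn hstep1 2
  have hsqβ : Real.sqrt βT ^ 2 = βT := Real.sq_sqrt hβT.le
  calc (∑ t ∈ Finset.range T, reg t) ^ 2
      ≤ (2 * Real.sqrt βT) ^ 2 * (∑ t ∈ Finset.range T, ∑ j, s j t) ^ 2 := hsq
    _ ≤ (2 * Real.sqrt βT) ^ 2 * ((T * N : ℝ) * ((∑ j, γ j) / L)) := by
        apply mul_le_mul_of_nonneg_left _ (by positivity)
        exact hstep2.trans (by
          apply mul_le_mul_of_nonneg_left hstep3 (by positivity))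
    _ = 4 * T * βT * N / L * ∑ j, γ j := by
        rw [mul_pow, hsqβ]; ring
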